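/- For the nonlinear term G(u) = ũ·Du, where ũ_j = (u_{j+1}+u_j+u_{j−1})/3, the discrete nonlinearity is conservative: for every u ∈ ℓ²(ℤ), ⟨u,Gu⟩ = Δx Σ_j u_j ũ_j (Du)_j = 0. -/
import Mathlib

set_option maxHeartbeats 1000000


/-- Symmetric difference Du_j = (u_{j+1} − u_{j−1})/(2Δx). -/
noncomputable def Dsym (Δx : ℝ) (u : ℤ → ℝ) (j : ℤ) : ℝ := (u (j + 1) - u (j - 1)) / (2 * Δx)

/-- Three-point average ũ_j = (u_{j+1} + u_j + u_{j−1})/3. -/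
noncomputable def avg3 (u : ℤ → ℝ) (j : ℤ) : ℝ := (u (j + 1) + u j + u (j - 1)) / 3

/-- Discrete nonlinearity G(u) = ũ·Du. -/
noncomputable def Gnl (Δx : ℝ) (u : ℤ → ℝ) (j : ℤ) : ℝ := avg3 u j * Dsym Δx u j

theorem stmt_7 (Δx : ℝ) (hΔx : 0 < Δx) (u : ℤ → ℝ)
    (hu : Summable (fun j => (u j) ^ 2)) :
    Δx * ∑' j : ℤ, u j * Gnl Δx u j = 0 := by
  set F : ℤ → ℝ := fun j => u j ^ 2 * u (j + 1) + u j * u (j + 1) ^ 2 with hF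
  -- boundedness of u
  set S : ℝ := ∑' j, (u j) ^ 2 with hS
  have hSnn : 0 ≤ S := tsum_nonneg (fun j => sq_nonneg _)
  have hbd : ∀ j, |u j| ≤ Real.sqrt S := by
    intro j
    have h1 : (u j) ^ 2 ≤ S := Summable.le_tsum hu j (fun i _ => sq_nonneg _)
    calc |u j| = Real.sqrt ((u j) ^ 2) := by rw [Real.sqrt_sq_eq_abs]
    _ ≤ Real.sqrt S := Real.sqrt_le_sqrt h1
  -- shifted summability
  have hu1 : Summable (fun j : ℤ => (u (j + 1)) ^ 2) :=
    ((Equiv.addRight (1 : ℤ)).summable_iff (f := fun j => (u j) ^ 2)).2 hu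
  -- F is summable
  have hFs : Summable F := by
    apply Summable.of_abs
    refine Summable.of_nonneg_of_le (fun j => abs_nonneg _) ?_
      ((hu.mul_left (Real.sqrt S)).add (hu1.mul_left (Real.sqrt S)))
    · intro j
      have h1 : |u j ^ 2 * u (j + 1)| ≤ Real.sqrt S * u j ^ 2 := by
        rw [abs_mul, abs_pow]
        calc |u j| ^ 2 * |u (j + 1)| ≤ |u j| ^ 2 * Real.sqrt S := by
              exact mul_le_mul_of_nonneg_left (hbd _) (by positivity)
        _ = Real.sqrt S * u j ^ 2 := by rw [sq_abs]; ring
      have h2 : |u j * u (j + 1) ^ 2| ≤ Real.sqrt S * u (j + 1) ^ 2 := by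
        rw [abs_mul, abs_pow]
        calc |u j| * |u (j + 1)| ^ 2 ≤ Real.sqrt S * |u (j + 1)| ^ 2 := by
              exact mul_le_mul_of_nonneg_right (hbd _) (by positivity)
        _ = Real.sqrt S * u (j + 1) ^ 2 := by rw [sq_abs]
      calc |F j| ≤ |u j ^ 2 * u (j + 1)| + |u j * u (j + 1) ^ 2| := abs_add_le _ _
      _ ≤ _ := add_le_add h1 h2
  have hFs' : Summable (fun j => F (j - 1)) :=
    ((Equiv.subRight (1 : ℤ)).summable_iff (f := F)).2 hFs
  -- the telescoping identity
  have hid : ∀ j : ℤ, u j * Gnl Δx u j = (F j - F (j - 1)) * (1 / (6 * Δx)) := by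
    intro j
    simp only [Gnl, avg3, Dsym, hF]
    have : (j - 1 : ℤ) + 1 = j := by ring
    rw [this]
    field_simp
    ring
  have hshift : ∑' j : ℤ, F (j - 1) = ∑' j, F j :=
    (Equiv.subRight (1 : ℤ)).tsum_eq F
  calc Δx * ∑' j : ℤ, u j * Gnl Δx u j
      = Δx * ∑' j : ℤ, (F j - F (j - 1)) * (1 / (6 * Δx)) := by
        congr 1; exact tsum_congr hid
    _ = Δx * ((∑' j : ℤ, (F j - F (j - 1))) * (1 / (6 * Δx))) := by rw [tsum_mul_right]
    _ = Δx * ((∑' j : ℤ, F j - ∑' j : ℤ, F (j - 1)) * (1 / (6 * Δx))) := by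
        rw [Summable.tsum_sub hFs hFs']
    _ = 0 := by rw [hshift]; ring
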